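/- For any probability distribution P = (p₁,…,pₙ) with all pᵢ > 0, there exists a binary alphabetic code with codeword lengths ℓᵢ = ⌈−log₂ pᵢ⌉ + 1, and its average length ∑ᵢ pᵢ·ℓᵢ is strictly less than H(P) + 2, where H(P) = −∑ᵢ pᵢ·log₂ pᵢ. -/

import Mathlib

def natToBits : ℕ → ℕ → List Bool
  | 0, _ => []
  | (l+1), v => (decide (2^l ≤ v)) :: natToBits l (v % 2^l)

lemma natToBits_length (l v : ℕ) : (natToBits l v).length = l := by
  induction l generalizing v with
  | zero => rfl
  | succ l ih => simp [natToBits, ih]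

lemma natToBits_take (m l v : ℕ) (h : m ≤ l) :
    (natToBits l v).take m = natToBits m (v / 2^(l-m)) := by
  induction m generalizing l v with
  | zero => simp [natToBits]
  | succ m ih =>
    obtain ⟨l, rfl⟩ : ∃ k, l = k + 1 := ⟨l-1, by omega⟩
    have hm : m ≤ l := by omega
    have hpos : 0 < 2^(l-m) := Nat.pow_pos (by norm_num)
    simp only [natToBits, List.take_succ_cons]
    rw [ih _ _ hm]
    have h1 : l + 1 - (m+1) = l - m := by omega
    have h2 : decide (2^m ≤ v / 2^(l-m)) = decide (2^l ≤ v) := by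
      rw [decide_eq_decide, Nat.le_div_iff_mul_le hpos, ← pow_add, Nat.add_sub_cancel' hm]
    have h3 : v % 2^l / 2^(l-m) = v / 2^(l-m) % 2^m := by
      have : (2:ℕ)^l = 2^(l-m) * 2^m := by rw [← pow_add]; congr 1; omega
      rw [this, Nat.mod_mul_right_div_self]
    rw [h1, h2, h3]

lemma natToBits_lex (l v₁ v₂ : ℕ) (h : v₁ < v₂) (h2 : v₂ < 2^l) :
    List.Lex (· < ·) (natToBits l v₁) (natToBits l v₂) := by
  induction l generalizing v₁ v₂ with
  | zero => simp at h2; omega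
  | succ l ih =>
    have hpos : 0 < 2^l := Nat.pow_pos (by norm_num)
    have hlt : v₂ < 2 * 2^l := by rw [pow_succ] at h2; omega
    by_cases hb1 : 2^l ≤ v₁ <;> by_cases hb2 : 2^l ≤ v₂
    · simp only [natToBits]
      rw [decide_eq_true hb1, decide_eq_true hb2]
      have e1 : v₁ % 2^l = v₁ - 2^l := by
        rw [Nat.mod_eq_sub_mod hb1, Nat.mod_eq_of_lt (by omega)]
      have e2 : v₂ % 2^l = v₂ - 2^l := by
        rw [Nat.mod_eq_sub_mod hb2, Nat.mod_eq_of_lt (by omega)]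
      exact List.Lex.cons (by rw [e1, e2]; exact ih _ _ (by omega) (by omega))
    · omega
    · simp only [natToBits, decide_eq_true_eq]
      rw [decide_eq_false hb1, decide_eq_true hb2]
      exact List.Lex.rel (by simp)
    · simp only [natToBits]
      rw [decide_eq_false hb1, decide_eq_false hb2,
        Nat.mod_eq_of_lt (by omega), Nat.mod_eq_of_lt (by omega)]
      exact List.Lex.cons (ih _ _ h (by omega))

lemma lex_irrefl : ∀ (a : List Bool), ¬ List.Lex (· < ·) a a
  | [], h => by cases h
  | (b::t), h => by
    cases h with
    | cons h => exact lex_irrefl t h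
    | rel h => exact absurd h (lt_irrefl b)

lemma natToBits_inj (l v₁ v₂ : ℕ) (h₁ : v₁ < 2^l) (h₂ : v₂ < 2^l)
    (h : natToBits l v₁ = natToBits l v₂) : v₁ = v₂ := by
  rcases lt_trichotomy v₁ v₂ with h'|h'|h'
  · exact absurd (h ▸ natToBits_lex l v₁ v₂ h' h₂) (lex_irrefl _)
  · exact h'
  · exact absurd (h ▸ natToBits_lex l v₂ v₁ h' h₁) (lex_irrefl _)

lemma lex_append {r : Bool → Bool → Prop} {a b : List Bool} (h : List.Lex r a b)
    (hl : a.length = b.length) : ∀ s t, List.Lex r (a ++ s) (b ++ t) := by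
  induction h with
  | nil => simp at hl
  | @cons x l₁ l₂ h ih => intro s t; exact List.Lex.cons (ih (by simpa using hl) s t)
  | rel h => intro s t; exact List.Lex.rel h
/-- No codeword is a prefix of another. -/
def PrefixFree {n : ℕ} (w : Fin n → List Bool) : Prop :=
  ∀ i j : Fin n, i ≠ j → ¬ (w i <+: w j)

/-- The codewords are strictly increasing in the lexicographic order on binary strings. -/
def LexIncreasing {n : ℕ} (w : Fin n → List Bool) : Prop :=
  ∀ i j : Fin n, i < j → List.Lex (· < ·) (w i) (w j)

/-- A binary alphabetic code: prefix-free and lexicographically increasing codewords. -/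
def IsAlphabeticCode {n : ℕ} (w : Fin n → List Bool) : Prop :=
  PrefixFree w ∧ LexIncreasing w

/-- Gilbert–Moore: there is an alphabetic code with lengths ⌈−log₂ pᵢ⌉ + 1 and
average length < H(P) + 2. -/

theorem gilbert_moore (n : ℕ) (hn : 0 < n) (p : Fin n → ℝ) (hp : ∀ i, 0 < p i)
    (hsum : ∑ i, p i = 1) :
    ∃ w : Fin n → List Bool, IsAlphabeticCode w ∧
      (∀ i, (w i).length = (⌈-Real.logb 2 (p i)⌉).toNat + 1) ∧
      ∑ i, p i * ((w i).length : ℝ) < (-∑ i, p i * Real.logb 2 (p i)) + 2 := by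
  classical
  obtain ⟨L, hL⟩ : ∃ L : Fin n → ℕ, ∀ i, L i = (⌈-Real.logb 2 (p i)⌉).toNat + 1 :=
    ⟨_, fun i => rfl⟩
  obtain ⟨r, hrdef⟩ : ∃ r : Fin n → ℝ,
      ∀ i, r i = (∑ j ∈ Finset.univ.filter (fun j => j < i), p j) + p i / 2 :=
    ⟨_, fun i => rfl⟩
  obtain ⟨V, hVdef⟩ : ∃ V : Fin n → ℕ, ∀ i, V i = (⌊r i * 2^(L i)⌋).toNat :=
    ⟨_, fun i => rfl⟩
  -- basic sums
  have hsub : ∀ i j : Fin n, i < j →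
      (∑ k ∈ Finset.univ.filter (fun k => k < i), p k) + p i ≤
        ∑ k ∈ Finset.univ.filter (fun k => k < j), p k := by
    intro i j hij
    have h2 : i ∉ Finset.univ.filter (fun k : Fin n => k < i) := by simp
    have h1 : insert i (Finset.univ.filter (fun k : Fin n => k < i)) ⊆
        Finset.univ.filter (fun k => k < j) := by
      intro k hk
      simp only [Finset.mem_insert, Finset.mem_filter, Finset.mem_univ, true_and] at *
      rcases hk with rfl | hk
      · exact hij
      · exact hk.trans hij
    calc (∑ k ∈ Finset.univ.filter (fun k : Fin n => k < i), p k) + p i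
        = ∑ k ∈ insert i (Finset.univ.filter (fun k : Fin n => k < i)), p k := by
          rw [Finset.sum_insert h2]; ring
      _ ≤ _ := Finset.sum_le_sum_of_subset_of_nonneg h1 (fun k _ _ => (hp k).le)
  have hgap : ∀ i j : Fin n, i < j → r i + p i / 2 + p j / 2 ≤ r j := by
    intro i j hij
    have := hsub i j hij
    rw [hrdef i, hrdef j]
    linarith
  have hrpos : ∀ i, 0 < r i := by
    intro i
    have h1 : (0:ℝ) ≤ ∑ j ∈ Finset.univ.filter (fun j : Fin n => j < i), p j :=
      Finset.sum_nonneg (fun k _ => (hp k).le)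
    have h2 := hp i
    rw [hrdef i]
    linarith
  have hrlt : ∀ i, r i + p i / 2 ≤ 1 := by
    intro i
    have h2 : i ∉ Finset.univ.filter (fun k : Fin n => k < i) := by simp
    have h1 : (∑ k ∈ insert i (Finset.univ.filter (fun k : Fin n => k < i)), p k) ≤ ∑ k, p k :=
      Finset.sum_le_sum_of_subset_of_nonneg (Finset.subset_univ _) (fun k _ _ => (hp k).le)
    rw [Finset.sum_insert h2, hsum] at h1
    rw [hrdef i]
    linarith
  have hr1 : ∀ i, r i < 1 := by
    intro i
    have h1 := hrlt i
    have h2 := hp i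
    linarith
  -- the key exponent inequality : 1 ≤ 2^(L i) * (p i / 2)
  have heps : ∀ i, (1:ℝ) ≤ 2^(L i) * (p i / 2) := by
    intro i
    set c : ℕ := (⌈-Real.logb 2 (p i)⌉).toNat with hc
    have h1 : (-Real.logb 2 (p i)) ≤ (c : ℝ) := by
      calc (-Real.logb 2 (p i)) ≤ ((⌈-Real.logb 2 (p i)⌉ : ℤ) : ℝ) := Int.le_ceil _
        _ ≤ ((c : ℕ) : ℝ) := by exact_mod_cast Int.self_le_toNat _
    have h2 : (2:ℝ) ^ (-Real.logb 2 (p i)) ≤ (2:ℝ) ^ ((c:ℕ):ℝ) :=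
      Real.rpow_le_rpow_of_exponent_le one_le_two h1
    rw [Real.rpow_natCast] at h2
    rw [Real.rpow_neg (by norm_num), Real.rpow_logb (by norm_num) (by norm_num) (hp i)] at h2
    have h3 : (1:ℝ) ≤ (2:ℝ)^c * p i := by
      have h4 := mul_le_mul_of_nonneg_right h2 (hp i).le
      rwa [inv_mul_cancel₀ (hp i).ne'] at h4
    have h4 : L i = c + 1 := by rw [hL i, hc]
    rw [h4, pow_succ]
    calc (1:ℝ) ≤ (2:ℝ)^c * p i := h3
      _ = (2:ℝ)^c * 2 * (p i / 2) := by ring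
  have hrLpos : ∀ i, (0:ℝ) ≤ r i * 2^(L i) := by
    intro i; have := hrpos i; positivity
  have hVcast : ∀ i, ((V i : ℕ) : ℝ) = (⌊r i * 2^(L i)⌋ : ℝ) := by
    intro i
    rw [hVdef i]
    exact_mod_cast Int.toNat_of_nonneg (Int.floor_nonneg.mpr (hrLpos i))
  have hVle : ∀ i, ((V i : ℕ) : ℝ) ≤ r i * 2^(L i) := by
    intro i; rw [hVcast i]; exact Int.floor_le _
  have hVgt : ∀ i, r i * 2^(L i) < (V i : ℝ) + 1 := by
    intro i; rw [hVcast i]; exact Int.lt_floor_add_one _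
  have hVlt : ∀ i, V i < 2^(L i) := by
    intro i
    have h1 : ((V i : ℕ) : ℝ) < 2^(L i) := by
      have h3 := hVle i
      have h2 : r i * 2^(L i) < 1 * 2^(L i) := by
        apply mul_lt_mul_of_pos_right (hr1 i); positivity
      rw [one_mul] at h2
      linarith
    have h5 : ((V i : ℕ) : ℝ) < ((2^(L i) : ℕ) : ℝ) := by push_cast; exact h1
    exact_mod_cast h5
  -- closeness from prefix
  have hkey : ∀ i j : Fin n, natToBits (L i) (V i) <+: natToBits (L j) (V j) →
      r j < r i + p i / 2 ∧ r i - p i / 2 < r j := by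
    intro i j hpre
    have hLij : L i ≤ L j := by
      have := hpre.length_le
      simpa [natToBits_length] using this
    have hDpos : (0:ℕ) < 2^(L j - L i) := Nat.pow_pos (by norm_num)
    have hpow : (2:ℕ)^(L i) * 2^(L j - L i) = 2^(L j) := by
      rw [← pow_add]; congr 1; omega
    have htake : natToBits (L i) (V i) = natToBits (L i) (V j / 2^(L j - L i)) := by
      have h1 := List.prefix_iff_eq_take.mp hpre
      rw [natToBits_length, natToBits_take _ _ _ hLij] at h1
      exact h1
    have hdivlt : V j / 2^(L j - L i) < 2^(L i) := by
      rw [Nat.div_lt_iff_lt_mul hDpos, hpow]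
      exact hVlt j
    have hVeq : V i = V j / 2^(L j - L i) :=
      natToBits_inj _ _ _ (hVlt i) hdivlt htake
    have hn1 : V i * 2^(L j - L i) ≤ V j := by
      rw [hVeq]; exact Nat.div_mul_le_self _ _
    have hn2 : V j < (V i + 1) * 2^(L j - L i) := by
      rw [← Nat.div_lt_iff_lt_mul hDpos, ← hVeq]
      omega
    set D : ℝ := (2:ℝ)^(L j - L i) with hD
    have hDpos' : (0:ℝ) < D := by positivity
    have hPpos : (0:ℝ) < (2:ℝ)^(L i) := by positivity
    have hpow' : (2:ℝ)^(L j) = (2:ℝ)^(L i) * D := by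
      rw [hD, ← pow_add]; congr 1; omega
    have hr1' : ((V i : ℕ) : ℝ) * D ≤ ((V j : ℕ) : ℝ) := by
      have h5 : ((V i * 2^(L j - L i) : ℕ) : ℝ) ≤ ((V j : ℕ) : ℝ) := by exact_mod_cast hn1
      push_cast at h5
      exact h5
    have hr2' : ((V j : ℕ) : ℝ) < (((V i : ℕ) : ℝ) + 1) * D := by
      have h5 : ((V j : ℕ) : ℝ) < (((V i + 1) * 2^(L j - L i) : ℕ) : ℝ) := by exact_mod_cast hn2
      push_cast at h5
      exact h5
    have hr3' : ((V j : ℕ) : ℝ) + 1 ≤ (((V i : ℕ) : ℝ) + 1) * D := by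
      rw [hD]
      exact_mod_cast Nat.succ_le_of_lt hn2
    have hepsi := heps i
    constructor
    · have c1 : r j * ((2:ℝ)^(L i)) * D < (r i + p i / 2) * (2:ℝ)^(L i) * D := by
        calc r j * ((2:ℝ)^(L i)) * D = r j * 2^(L j) := by rw [hpow']; ring
          _ < (V j : ℝ) + 1 := hVgt j
          _ ≤ ((V i : ℝ) + 1) * D := hr3'
          _ ≤ (r i * 2^(L i) + 1) * D := by nlinarith [hVle i, hDpos']
          _ ≤ (r i * 2^(L i) + 2^(L i) * (p i / 2)) * D := by nlinarith [hDpos']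
          _ = (r i + p i / 2) * (2:ℝ)^(L i) * D := by ring
      have c2 := lt_of_mul_lt_mul_right c1 hDpos'.le
      exact lt_of_mul_lt_mul_right c2 hPpos.le
    · have c1 : (r i - p i / 2) * (2:ℝ)^(L i) * D < r j * ((2:ℝ)^(L i)) * D := by
        calc (r i - p i / 2) * (2:ℝ)^(L i) * D
            = (r i * 2^(L i) - 2^(L i) * (p i / 2)) * D := by ring
          _ ≤ (r i * 2^(L i) - 1) * D := by nlinarith [hDpos']
          _ < ((V i : ℝ)) * D := by nlinarith [hVgt i, hDpos']
          _ ≤ ((V j : ℕ) : ℝ) := hr1'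
          _ ≤ r j * 2^(L j) := hVle j
          _ = r j * (2:ℝ)^(L i) * D := by rw [hpow']; ring
      have c2 := lt_of_mul_lt_mul_right c1 hDpos'.le
      exact lt_of_mul_lt_mul_right c2 hPpos.le
  -- prefix-freeness
  have hpf : PrefixFree (fun i => natToBits (L i) (V i)) := by
    intro i j hne hpre
    simp only at hpre
    have hk := hkey i j hpre
    rcases lt_trichotomy i j with hij | rfl | hij
    · have h1 := hgap i j hij
      have h2 := hp j
      linarith [hk.1]
    · exact hne rfl
    · have h1 := hgap j i hij
      have h2 := hp j
      linarith [hk.2]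
  refine ⟨fun i => natToBits (L i) (V i), ⟨hpf, ?_⟩, ?_, ?_⟩
  · -- lex increasing
    intro i j hij
    simp only
    set m := min (L i) (L j) with hm
    have hmi : m ≤ L i := min_le_left _ _
    have hmj : m ≤ L j := min_le_right _ _
    have hMpos : (0:ℝ) < (2:ℝ)^m := by positivity
    set ai := V i / 2^(L i - m) with hai
    set aj := V j / 2^(L j - m) with haj
    have htki : (natToBits (L i) (V i)).take m = natToBits m ai := natToBits_take _ _ _ hmi
    have htkj : (natToBits (L j) (V j)).take m = natToBits m aj := natToBits_take _ _ _ hmj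
    have hDi : (0:ℕ) < 2^(L i - m) := Nat.pow_pos (by norm_num)
    have hDj : (0:ℕ) < 2^(L j - m) := Nat.pow_pos (by norm_num)
    have hajlt : aj < 2^m := by
      rw [haj, Nat.div_lt_iff_lt_mul hDj]
      calc V j < 2^(L j) := hVlt j
        _ = 2^m * 2^(L j - m) := by rw [← pow_add]; congr 1; omega
    have hailt : ai < 2^m := by
      rw [hai, Nat.div_lt_iff_lt_mul hDi]
      calc V i < 2^(L i) := hVlt i
        _ = 2^m * 2^(L i - m) := by rw [← pow_add]; congr 1; omega
    have hrij : r i < r j := by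
      have h1 := hgap i j hij
      have h2 := hp i
      have h3 := hp j
      linarith
    -- ai ≤ aj via reals
    have hpi : (2:ℝ)^(L i) = (2:ℝ)^m * (2:ℝ)^(L i - m) := by rw [← pow_add]; congr 1; omega
    have hpj : (2:ℝ)^(L j) = (2:ℝ)^m * (2:ℝ)^(L j - m) := by rw [← pow_add]; congr 1; omega
    have hDi' : (0:ℝ) < (2:ℝ)^(L i - m) := by positivity
    have hDj' : (0:ℝ) < (2:ℝ)^(L j - m) := by positivity
    have hA1 : ((ai:ℕ):ℝ) ≤ r i * 2^m := by
      have h5 : ((ai * 2^(L i - m) : ℕ) : ℝ) ≤ ((V i : ℕ) : ℝ) := by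
        exact_mod_cast Nat.div_mul_le_self (V i) (2^(L i - m))
      push_cast at h5
      have h6 : ((ai:ℕ):ℝ) * 2^(L i - m) ≤ r i * 2^m * 2^(L i - m) := by
        calc ((ai:ℕ):ℝ) * 2^(L i - m) ≤ ((V i : ℕ) : ℝ) := h5
          _ ≤ r i * 2^(L i) := hVle i
          _ = r i * 2^m * 2^(L i - m) := by rw [hpi]; ring
      exact le_of_mul_le_mul_right h6 hDi'
    have hA2 : r j * 2^m < ((aj:ℕ):ℝ) + 1 := by
      have h4 : V j < (aj + 1) * 2^(L j - m) := by
        rw [← Nat.div_lt_iff_lt_mul hDj, ← haj]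
        omega
      have h5 : ((V j : ℕ) : ℝ) + 1 ≤ (((aj:ℕ):ℝ) + 1) * 2^(L j - m) := by
        exact_mod_cast Nat.succ_le_of_lt h4
      have h6 : r j * 2^m * 2^(L j - m) < (((aj:ℕ):ℝ) + 1) * 2^(L j - m) := by
        calc r j * 2^m * 2^(L j - m) = r j * 2^(L j) := by rw [hpj]; ring
          _ < ((V j : ℕ) : ℝ) + 1 := hVgt j
          _ ≤ _ := h5
      exact lt_of_mul_lt_mul_right h6 hDj'.le
    have haij : ai ≤ aj := by
      have h1 : ((ai:ℕ):ℝ) < ((aj:ℕ):ℝ) + 1 := by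
        calc ((ai:ℕ):ℝ) ≤ r i * 2^m := hA1
          _ < r j * 2^m := by nlinarith
          _ < ((aj:ℕ):ℝ) + 1 := hA2
      have h2 : ai < aj + 1 := by exact_mod_cast h1
      omega
    have hne : ai ≠ aj := by
      intro heq
      rcases le_total (L i) (L j) with hll | hll
      · have hmli : m = L i := min_eq_left hll
        have hpre : natToBits (L i) (V i) <+: natToBits (L j) (V j) := by
          have e1 : natToBits (L i) (V i) = (natToBits (L j) (V j)).take m := by
            rw [htkj, ← heq, ← htki, hmli,
              List.take_of_length_le (le_of_eq (natToBits_length (L i) (V i)))]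
          rw [e1]
          exact List.take_prefix _ _
        have hk := hkey i j hpre
        have h1 := hgap i j hij
        have h2 := hp j
        linarith [hk.1]
      · have hmlj : m = L j := min_eq_right hll
        have hpre : natToBits (L j) (V j) <+: natToBits (L i) (V i) := by
          have e1 : natToBits (L j) (V j) = (natToBits (L i) (V i)).take m := by
            rw [htki, heq, ← htkj, hmlj,
              List.take_of_length_le (le_of_eq (natToBits_length (L j) (V j)))]
          rw [e1]
          exact List.take_prefix _ _
        have hk := hkey j i hpre
        have h1 := hgap i j hij
        have h2 := hp i
        linarith [hk.2]
    have hlt : ai < aj := lt_of_le_of_ne haij hne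
    have hlex : List.Lex (· < ·) (natToBits m ai) (natToBits m aj) :=
      natToBits_lex m ai aj hlt hajlt
    have e1 : natToBits (L i) (V i) = natToBits m ai ++ (natToBits (L i) (V i)).drop m := by
      rw [← htki, List.take_append_drop]
    have e2 : natToBits (L j) (V j) = natToBits m aj ++ (natToBits (L j) (V j)).drop m := by
      rw [← htkj, List.take_append_drop]
    rw [e1, e2]
    exact lex_append hlex (by simp [natToBits_length]) _ _
  · -- lengths
    intro i
    simp only [natToBits_length]
    exact hL i
  · -- average length
    have hple : ∀ i, p i ≤ 1 := by
      intro i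
      calc p i ≤ ∑ k, p k := Finset.single_le_sum (fun k _ => (hp k).le) (Finset.mem_univ i)
        _ = 1 := hsum
    have hterm : ∀ i : Fin n, p i * ((natToBits (L i) (V i)).length : ℝ) <
        p i * (-Real.logb 2 (p i)) + 2 * p i := by
      intro i
      rw [natToBits_length]
      have hx : (0:ℝ) ≤ -Real.logb 2 (p i) := by
        have := Real.logb_nonpos one_lt_two (hp i).le (hple i)
        linarith
      have hceil : (0:ℤ) ≤ ⌈-Real.logb 2 (p i)⌉ := Int.ceil_nonneg hx
      have h2 : ((⌈-Real.logb 2 (p i)⌉ : ℤ) : ℝ) < -Real.logb 2 (p i) + 1 := Int.ceil_lt_add_one _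
      have h3 : ((L i : ℕ) : ℝ) = ((⌈-Real.logb 2 (p i)⌉ : ℤ) : ℝ) + 1 := by
        have h4 : L i = (⌈-Real.logb 2 (p i)⌉).toNat + 1 := hL i
        rw [h4]
        push_cast
        have h5 : ((⌈-Real.logb 2 (p i)⌉.toNat : ℕ) : ℝ) = ((⌈-Real.logb 2 (p i)⌉ : ℤ) : ℝ) := by
          exact_mod_cast Int.toNat_of_nonneg hceil
        rw [h5]
      have h1 : ((L i : ℕ) : ℝ) < -Real.logb 2 (p i) + 2 := by rw [h3]; linarith
      nlinarith [hp i]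
    haveI : Nonempty (Fin n) := ⟨⟨0, hn⟩⟩
    calc ∑ i, p i * ((natToBits (L i) (V i)).length : ℝ)
        < ∑ i, (p i * (-Real.logb 2 (p i)) + 2 * p i) :=
          Finset.sum_lt_sum_of_nonempty Finset.univ_nonempty (fun i _ => hterm i)
      _ = (-∑ i, p i * Real.logb 2 (p i)) + 2 := by
          rw [Finset.sum_add_distrib, ← Finset.mul_sum, hsum]
          simp only [mul_neg]
          rw [Finset.sum_neg_distrib]
          ring
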